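/- Let R(X,Y): Γ(H) → Γ(H) be curvature operators satisfying the Bianchi-type identity R(X,Y)Z + R(Z,X)Y + R(Y,Z)X = dη(X,Y)τ(Z) + dη(Z,X)τ(Y) + dη(Y,Z)τ(X) on a 4-dimensional H with orthonormal basis e₁,...,e₄ and dη = e¹∧e² + e³∧e⁴, where τ is self-adjoint, trace-free, and anticommutes with J. Then the correction term B(X,Y) = (i/2)Σ_{α=1}^4 g(B_α(X,Y), Je_α) vanishes, where B_α(X,Y) = dη(X,Y)τ(e_α) + dη(e_α,X)τ(Y) + dη(Y,e_α)τ(X). -/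

import Mathlib

/-!
The three terms of `∑_α g(B_α(X,Y), Je_α)` vanish or cancel separately. The first is
`dη(X,Y) · tr(J*τ) = -dη(X,Y) · tr(Jτ)`, and `tr(Jτ) = tr(τJ) = -tr(Jτ)`. Since `J` is
orthogonal, `(Je_α)` is again an orthonormal basis, so Parseval turns the other two terms into
`g(τY, X)` and `-g(τX, Y)`, which cancel because `τ` is self-adjoint.
-/

open RealInnerProductSpace

/-- The standard basis of `H = ℝ⁴`. -/
noncomputable def e (α : Fin 4) : EuclideanSpace ℝ (Fin 4) :=
  EuclideanSpace.single α (1 : ℝ)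

theorem LinearMap.trace_comp_eq_zero_of_anticommute {K M : Type*} [Field K] [CharZero K]
    [AddCommGroup M] [Module K M] {J τ : M →ₗ[K] M} (hanti : ∀ x, τ (J x) = -J (τ x)) :
    trace K M (J ∘ₗ τ) = 0 := by
  have hcomm : τ ∘ₗ J = -(J ∘ₗ τ) := LinearMap.ext hanti
  have h : trace K M (J ∘ₗ τ) = -trace K M (J ∘ₗ τ) := by
    rw [← map_neg, ← hcomm]
    exact trace_mul_comm K J τ
  exact self_eq_neg.mp h

section SkewComplexStructure

variable {E ι : Type*} [NormedAddCommGroup E] [InnerProductSpace ℝ E] [Fintype ι]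
  (b : OrthonormalBasis ι ℝ E) {J τ : E →ₗ[ℝ] E}

theorem sum_inner_apply_map_eq_zero (hJ : ∀ x y, ⟪J x, y⟫ = -⟪x, J y⟫)
    (hanti : ∀ x, τ (J x) = -J (τ x)) :
    ∑ i, ⟪τ (b i), J (b i)⟫ = 0 := by
  have h : ∀ i, ⟪τ (b i), J (b i)⟫ = -⟪b i, (J ∘ₗ τ) (b i)⟫ := fun i => by
    rw [LinearMap.comp_apply, real_inner_comm, hJ]
  simp only [h, Finset.sum_neg_distrib, ← LinearMap.trace_eq_sum_inner,
    LinearMap.trace_comp_eq_zero_of_anticommute hanti, neg_zero]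

theorem sum_inner_map_mul_inner_map (hJ : ∀ x y, ⟪J x, y⟫ = -⟪x, J y⟫)
    (hJJ : ∀ x, J (J x) = -x) (x y : E) :
    ∑ i, ⟪J (b i), x⟫ * ⟪y, J (b i)⟫ = ⟪y, x⟫ := by
  calc ∑ i, ⟪J (b i), x⟫ * ⟪y, J (b i)⟫ = ∑ i, ⟪J y, b i⟫ * ⟪b i, J x⟫ := by
        refine Finset.sum_congr rfl fun i _ => ?_
        rw [hJ, real_inner_comm (J (b i)) y, hJ, real_inner_comm (J y) (b i)]
        ring
    _ = ⟪J y, J x⟫ := b.sum_inner_mul_inner _ _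
    _ = ⟪y, x⟫ := by rw [hJ, hJJ, inner_neg_right, neg_neg]

variable (J τ) in
/-- `correctionTerm J τ X Y (e α)` is the paper's `B_α(X,Y)`. -/
def correctionTerm (X Y v : E) : E :=
  ⟪J X, Y⟫ • τ v + ⟪J v, X⟫ • τ Y + ⟪J Y, v⟫ • τ X

theorem sum_inner_correctionTerm_map_eq_zero (hJ : ∀ x y, ⟪J x, y⟫ = -⟪x, J y⟫)
    (hJJ : ∀ x, J (J x) = -x) (hτ : ∀ x y, ⟪τ x, y⟫ = ⟪x, τ y⟫)
    (hanti : ∀ x, τ (J x) = -J (τ x)) (X Y : E) :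
    ∑ i, ⟪correctionTerm J τ X Y (b i), J (b i)⟫ = 0 := by
  have hthird : ∀ i, ⟪J Y, b i⟫ = -⟪J (b i), Y⟫ := fun i => by
    rw [hJ, real_inner_comm, hJ, neg_neg]
  simp only [correctionTerm, inner_add_left, real_inner_smul_left, hthird, neg_mul, Finset.sum_add_distrib,
    Finset.sum_neg_distrib, ← Finset.mul_sum, sum_inner_apply_map_eq_zero b hJ hanti,
    sum_inner_map_mul_inner_map b hJ hJJ]
  rw [hτ Y X, real_inner_comm (τ X) Y]
  ring

end SkewComplexStructure

theorem euclideanSpace_four_eq_sum_smul_e (x : EuclideanSpace ℝ (Fin 4)) :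
    x = x 0 • e 0 + x 1 • e 1 + x 2 • e 2 + x 3 • e 3 := by
  conv_lhs => rw [← (EuclideanSpace.basisFun (Fin 4) ℝ).sum_repr x]
  simp [Fin.sum_univ_four, e]

theorem skew_and_sq_eq_neg_of_apply_e {J : EuclideanSpace ℝ (Fin 4) →ₗ[ℝ] EuclideanSpace ℝ (Fin 4)}
    (hJ0 : J (e 0) = e 1) (hJ1 : J (e 1) = -e 0) (hJ2 : J (e 2) = e 3) (hJ3 : J (e 3) = -e 2) :
    (∀ x y, ⟪J x, y⟫ = -⟪x, J y⟫) ∧ ∀ x, J (J x) = -x := by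
  have hJx : ∀ x : EuclideanSpace ℝ (Fin 4),
      J x = x 0 • e 1 - x 1 • e 0 + x 2 • e 3 - x 3 • e 2 := fun x => by
    conv_lhs => rw [euclideanSpace_four_eq_sum_smul_e x]
    simp only [map_add, map_smul, hJ0, hJ1, hJ2, hJ3, smul_neg]
    module
  refine ⟨fun x y => ?_, fun x => ?_⟩
  · have he : ∀ (z : EuclideanSpace ℝ (Fin 4)) i, ⟪e i, z⟫ = z i := fun z i => by
      simp [e, EuclideanSpace.inner_single_left]
    rw [hJx x, hJx y, real_inner_comm _ x]
    simp only [inner_add_left, inner_sub_left, real_inner_smul_left, he]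
    ring
  · rw [hJx x]
    conv_rhs => rw [euclideanSpace_four_eq_sum_smul_e x]
    simp only [map_add, map_sub, map_smul, hJ0, hJ1, hJ2, hJ3, smul_neg]
    module

theorem stmt17_general
    (J τ : EuclideanSpace ℝ (Fin 4) →ₗ[ℝ] EuclideanSpace ℝ (Fin 4))
    (hJ0 : J (e 0) = e 1) (hJ1 : J (e 1) = -e 0)
    (hJ2 : J (e 2) = e 3) (hJ3 : J (e 3) = -e 2)
    (hτsa : ∀ X Y, ⟪τ X, Y⟫ = ⟪X, τ Y⟫)
    (hanti : ∀ X, τ (J X) = -J (τ X)) :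
    ∀ X Y, (Complex.I / 2) *
        ((∑ α : Fin 4,
          ⟪⟪J X, Y⟫ • τ (e α) + ⟪J (e α), X⟫ • τ Y + ⟪J Y, e α⟫ • τ X, J (e α)⟫ : ℝ) : ℂ)
      = 0 := by
  intro X Y
  obtain ⟨hJ, hJJ⟩ := skew_and_sq_eq_neg_of_apply_e hJ0 hJ1 hJ2 hJ3
  have hbasis : ∀ α, EuclideanSpace.basisFun (Fin 4) ℝ α = e α := fun α => by
    rw [EuclideanSpace.basisFun_apply, e]
  have hsum := sum_inner_correctionTerm_map_eq_zero (EuclideanSpace.basisFun (Fin 4) ℝ)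
    hJ hJJ hτsa hanti X Y
  simp only [hbasis, correctionTerm] at hsum
  rw [hsum, Complex.ofReal_zero, mul_zero]

/-- on `H = ℝ⁴` with `Je₁ = e₂, Je₂ = -e₁, Je₃ = e₄, Je₄ = -e₃`,
`dη(X,Y) = g(JX,Y)`, `τ` self-adjoint, trace-free and anticommuting with `J`, and
curvature operators `R(X,Y)` satisfying the Bianchi-type identity
`R(X,Y)Z + R(Z,X)Y + R(Y,Z)X = dη(X,Y)τZ + dη(Z,X)τY + dη(Y,Z)τX`, the correction term
`B(X,Y) = (i/2) Σ_α g(B_α(X,Y), Je_α)` vanishes, where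
`B_α(X,Y) = dη(X,Y)τ(e_α) + dη(e_α,X)τ(Y) + dη(Y,e_α)τ(X)`. -/
theorem stmt17
    (J τ : EuclideanSpace ℝ (Fin 4) →ₗ[ℝ] EuclideanSpace ℝ (Fin 4))
    (hJ0 : J (e 0) = e 1) (hJ1 : J (e 1) = -e 0)
    (hJ2 : J (e 2) = e 3) (hJ3 : J (e 3) = -e 2)
    (hτsa : ∀ X Y, ⟪τ X, Y⟫ = ⟪X, τ Y⟫)
    (hτtr : LinearMap.trace ℝ (EuclideanSpace ℝ (Fin 4)) τ = 0)
    (hanti : ∀ X, τ (J X) = -J (τ X))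
    (R : EuclideanSpace ℝ (Fin 4) →ₗ[ℝ] EuclideanSpace ℝ (Fin 4) →ₗ[ℝ]
          (EuclideanSpace ℝ (Fin 4) →ₗ[ℝ] EuclideanSpace ℝ (Fin 4)))
    (hBianchi : ∀ X Y Z, R X Y Z + R Z X Y + R Y Z X =
        ⟪J X, Y⟫ • τ Z + ⟪J Z, X⟫ • τ Y + ⟪J Y, Z⟫ • τ X) :
    ∀ X Y, (Complex.I / 2) *
        ((∑ α : Fin 4,
          ⟪⟪J X, Y⟫ • τ (e α) + ⟪J (e α), X⟫ • τ Y + ⟪J Y, e α⟫ • τ X, J (e α)⟫ : ℝ) : ℂ)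
      = 0 :=
  stmt17_general J τ hJ0 hJ1 hJ2 hJ3 hτsa hanti
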